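/- arXiv:1204.0354 — 3 statements merged into one kernel-verified Lean document; each statement's English description precedes it below -/
import Mathlib

section
/- Let T be a finite tree on n vertices, s_1 ≠ s_2 vertices with ρ(s_1,s_2) = (s_1, u_1, …, u_m, s_2). For 1 ≤ i ≤ j ≤ m define q(u_i, u_j) by the recursion q(v,v) = |T_v(s_1,s_2)|^{-1} and q(u_i,u_j) = |T_{ρ(u_i,u_j)}(s_1,s_2)|^{-1} (q(u_{i+1},u_j) + q(u_i,u_{j-1})) for i < j, where T_{ρ(u_i,u_j)}(s_1,s_2) = ∪_{v ∈ ρ(u_i,u_j)} T_v(s_1,s_2). Then q(u_1,u_m) = Σ_{ξ ∈ Γ(u_1,u_m)} ∏_{i=1}^m I_i(ξ)^{-1}, where Γ(u_1,u_m) is the set of permutations ξ of {u_1,…,u_m} whose reversal is an infection sequence of the path from {s_1,s_2}, and I_i(ξ) = Σ_{j ≤ i} |T_{ξ_j}(s_1,s_2)|. -/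
/-!
Write the path as `u₀ = s₁, u₁, …, u_{m+1} = s₂`. In a tree the subtrees `T_{u_k}` are pairwise
disjoint (a vertex of two of them could reach `s₁` or `s₂` avoiding one of the roots), so
`|T_{ρ(u_i,u_j)}| = ∑_{i ≤ k ≤ j} |T_{u_k}|`; and among path vertices `u_k` is adjacent only to
`u_{k ± 1}`. Hence an infection of the segment `u_a, …, u_b` from its outer neighbours starts at
`u_a` or `u_b` and continues as an infection of the remaining segment. In `∏ I_i(ξ)⁻¹` for the
reversed sequence `ξ`, the factor with `i` maximal is `|T_{ρ(u_a,u_b)}|⁻¹` whatever the order, so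
the sum over `ξ` obeys the same two-term recursion as `q`.
-/

/-- `σ` is an infection sequence on vertex set `A` from source set `S`. -/
def IsInfSeqOn {V : Type*} (G : SimpleGraph V) (A S : Set V) (σ : List V) : Prop :=
  σ.Nodup ∧ (∀ v, v ∈ σ ↔ v ∈ A \ S) ∧
  ∀ i (h : i < σ.length), ∃ u, (u ∈ S ∨ u ∈ σ.take i) ∧ G.Adj u σ[i]

/-- The subtree `T_u(s₁,s₂)` hanging off `u` relative to the path between `s₁` and `s₂`:
vertices `v` all of whose walks to `s₁` and to `s₂` pass through `u`. -/
def pairSubtree {V : Type*} (G : SimpleGraph V) (s₁ s₂ u : V) : Set V :=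
  {v | (∀ p : G.Walk v s₁, u ∈ p.support) ∧ (∀ p : G.Walk v s₂, u ∈ p.support)}

/-- The set of vertices lying on the (unique, in a tree) path between `s₁` and `s₂`. -/
def onPath {V : Type*} (G : SimpleGraph V) (s₁ s₂ : V) : Set V :=
  {v | ∀ p : G.Walk s₁ s₂, p.IsPath → v ∈ p.support}

/-- `I_i(ξ; s₁, s₂)`: total number of vertices in the subtrees rooted at the first `i`
elements of the list `ξ`. -/
noncomputable def Ifun {V : Type*} (G : SimpleGraph V) (s₁ s₂ : V) (ξ : List V)
    (i : ℕ) : ℕ :=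
  ((ξ.take i).map fun v => (pairSubtree G s₁ s₂ v).ncard).sum

/-- `|T_{ρ(u_i,u_j)}(s₁,s₂)|`: total size of the union of the subtrees hanging off the
path segment `u_i, …, u_j`. -/
noncomputable def segSize {V : Type*} (G : SimpleGraph V) (s₁ s₂ : V) (u : ℕ → V)
    (i j : ℕ) : ℕ :=
  (⋃ k ∈ Set.Icc i j, pairSubtree G s₁ s₂ (u k)).ncard

open SimpleGraph

section InfectionSequence

variable {V : Type*} {G : SimpleGraph V} {A S : Set V}

theorem isInfSeqOn_nil_iff : IsInfSeqOn G A S [] ↔ A ⊆ S := by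
  simp [IsInfSeqOn, Set.subset_def]

theorem IsInfSeqOn.eq_nil_of_subset {σ : List V} (h : IsInfSeqOn G A S σ) (hAS : A ⊆ S) :
    σ = [] :=
  List.eq_nil_iff_forall_not_mem.2 fun v hv => ((h.2.1 v).1 hv).2 (hAS ((h.2.1 v).1 hv).1)

theorem isInfSeqOn_cons_iff {x : V} {σ : List V} :
    IsInfSeqOn G A S (x :: σ) ↔
      (x ∈ A \ S ∧ ∃ y ∈ S, G.Adj y x) ∧ IsInfSeqOn G A (insert x S) σ := by
  simp only [IsInfSeqOn, List.nodup_cons, List.mem_cons, List.length_cons]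
  constructor
  · rintro ⟨⟨hxσ, hσ⟩, hmem, hinf⟩
    have hx : x ∈ A \ S := (hmem x).1 (Or.inl rfl)
    refine ⟨⟨hx, ?_⟩, hσ, fun v => ?_, fun i hi => ?_⟩
    · obtain ⟨y, hy, hadj⟩ := hinf 0 (Nat.succ_pos _)
      exact ⟨y, by simpa using hy, hadj⟩
    · have := hmem v
      constructor
      · intro hv
        have hvx : v ≠ x := by rintro rfl; exact hxσ hv
        simp_all
      · intro hv
        simp only [Set.mem_sdiff, Set.mem_insert_iff, not_or] at hv
        exact (this.2 ⟨hv.1, hv.2.2⟩).resolve_left hv.2.1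
    · obtain ⟨y, hy, hadj⟩ := hinf (i + 1) (by omega)
      refine ⟨y, ?_, hadj⟩
      simpa [List.take_succ_cons, or_assoc, or_left_comm] using hy
  · rintro ⟨⟨hx, y, hy, hadj⟩, hσ, hmem, hinf⟩
    refine ⟨⟨fun h => ((hmem x).1 h).2 (Set.mem_insert x S), hσ⟩, fun v => ?_, fun i hi => ?_⟩
    · rw [hmem v]
      by_cases hvx : v = x
      · simp [hvx, hx]
      · simp [hvx]
    · cases i with
      | zero => exact ⟨y, Or.inl hy, hadj⟩
      | succ i =>
        obtain ⟨z, hz, hadj⟩ := hinf i (by omega)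
        refine ⟨z, ?_, hadj⟩
        simpa [List.take_succ_cons, or_assoc, or_left_comm] using hz

end InfectionSequence

section SuffixWeight

variable {α : Type*}

noncomputable def suffixWeight (w : α → ℕ) : List α → ℝ
  | [] => 1
  | x :: σ => (((x :: σ).map w).sum : ℝ)⁻¹ * suffixWeight w σ

theorem prod_inv_sum_take_eq_suffixWeight_reverse (w : α → ℕ) (ξ : List α) :
    ∏ i ∈ Finset.range ξ.length, ((((ξ.take (i + 1)).map w).sum : ℕ) : ℝ)⁻¹ =
      suffixWeight w ξ.reverse := by
  induction ξ using List.reverseRecOn with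
  | nil => rfl
  | append_singleton ξ x ih =>
    have htake : ∀ i ∈ Finset.range ξ.length, (ξ ++ [x]).take (i + 1) = ξ.take (i + 1) :=
      fun i hi => List.take_append_of_le_length (Finset.mem_range.1 hi)
    rw [List.length_append, List.length_singleton, Finset.prod_range_succ,
      Finset.prod_congr rfl fun i hi => by rw [htake i hi], ih, List.take_of_length_le (by simp),
      List.reverse_append, List.reverse_singleton, List.singleton_append, suffixWeight,
      mul_comm]
    simp [List.sum_reverse, add_comm]

theorem prod_inv_Ifun_eq_suffixWeight_reverse {V : Type*} (G : SimpleGraph V) (s₁ s₂ : V)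
    {ξ : List V} {m : ℕ} (hξ : ξ.length = m) :
    ∏ i ∈ Finset.range m, ((Ifun G s₁ s₂ ξ (i + 1) : ℕ) : ℝ)⁻¹ =
      suffixWeight (fun v => (pairSubtree G s₁ s₂ v).ncard) ξ.reverse :=
  hξ ▸ prod_inv_sum_take_eq_suffixWeight_reverse _ ξ

end SuffixWeight

section EndpointOrders

variable {α : Type*} [DecidableEq α]

/-- The orders in which `u a, …, u (a + n)` can be infected from both ends, first infected
first; the paper's `Γ(u_a, u_{a+n})` consists of their reversals. -/
def endpointOrders (u : ℕ → α) : ℕ → ℕ → Finset (List α)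
  | 0, a => {[u a]}
  | n + 1, a =>
    (endpointOrders u n (a + 1)).image (u a :: ·) ∪
      (endpointOrders u n a).image (u (a + n + 1) :: ·)

theorem perm_of_mem_endpointOrders {u : ℕ → α} :
    ∀ {n a σ}, σ ∈ endpointOrders u n a → σ.Perm ((List.range' a (n + 1)).map u)
  | 0, a, σ, h => by simp_all [endpointOrders]
  | n + 1, a, σ, h => by
    simp only [endpointOrders, Finset.mem_union, Finset.mem_image] at h
    rcases h with ⟨τ, hτ, rfl⟩ | ⟨τ, hτ, rfl⟩
    · rw [List.range'_succ, List.map_cons]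
      exact (perm_of_mem_endpointOrders hτ).cons _
    · rw [List.range'_1_concat, List.map_append, List.map_singleton]
      exact ((perm_of_mem_endpointOrders hτ).cons _).trans (List.perm_append_singleton _ _).symm

theorem length_of_mem_endpointOrders {u : ℕ → α} {n a : ℕ} {σ : List α}
    (h : σ ∈ endpointOrders u n a) : σ.length = n + 1 := by
  simp [(perm_of_mem_endpointOrders h).length_eq]

theorem sum_map_of_mem_endpointOrders {u : ℕ → α} {n a : ℕ} {σ : List α}
    (h : σ ∈ endpointOrders u n a) (w : α → ℕ) :
    (σ.map w).sum = ∑ k ∈ Finset.Icc a (a + n), w (u k) := by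
  rw [((perm_of_mem_endpointOrders h).map w).sum_eq, List.map_map,
    ← List.sum_toFinset _ List.nodup_range', List.toFinset_range'_1, ← add_assoc,
    Finset.Ico_add_one_right_eq_Icc]
  rfl

theorem suffixWeight_eq_of_mem_endpointOrders {u : ℕ → α} {n a : ℕ} {σ : List α}
    (h : σ ∈ endpointOrders u n a) (w : α → ℕ) :
    suffixWeight w σ =
      ((∑ k ∈ Finset.Icc a (a + n), w (u k) : ℕ) : ℝ)⁻¹ * suffixWeight w σ.tail := by
  cases σ with
  | nil => exact absurd (length_of_mem_endpointOrders h) (by simp)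
  | cons x τ => rw [suffixWeight, sum_map_of_mem_endpointOrders h, List.tail_cons]

theorem sum_suffixWeight_endpointOrders (u : ℕ → α) (w : α → ℕ) (q : ℕ → ℕ → ℝ) {m : ℕ}
    (hu : Set.InjOn u (Set.Icc 1 m))
    (hq1 : ∀ i, 1 ≤ i → i ≤ m → q i i = ((w (u i) : ℕ) : ℝ)⁻¹)
    (hq2 : ∀ i j, 1 ≤ i → i < j → j ≤ m →
      q i j = ((∑ k ∈ Finset.Icc i j, w (u k) : ℕ) : ℝ)⁻¹ * (q (i + 1) j + q i (j - 1)))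
    (n a : ℕ) (ha : 1 ≤ a) (hn : a + n ≤ m) :
    q a (a + n) = ∑ σ ∈ endpointOrders u n a, suffixWeight w σ := by
  induction n generalizing a with
  | zero => simp [endpointOrders, suffixWeight, hq1 a ha hn]
  | succ n ih =>
    have hends : u a ≠ u (a + n + 1) := fun h => by
      have := hu ⟨ha, by omega⟩ ⟨by omega, hn⟩ h
      omega
    calc q a (a + (n + 1))
        = ((∑ k ∈ Finset.Icc a (a + (n + 1)), w (u k) : ℕ) : ℝ)⁻¹ *
            (q (a + 1) (a + 1 + n) + q a (a + n)) := by
          rw [hq2 a _ ha (by omega) hn, show a + (n + 1) - 1 = a + n by omega,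
            show a + 1 + n = a + (n + 1) by omega]
      _ = ((∑ k ∈ Finset.Icc a (a + (n + 1)), w (u k) : ℕ) : ℝ)⁻¹ *
            ∑ σ ∈ endpointOrders u (n + 1) a, suffixWeight w σ.tail := by
          rw [ih (a + 1) (by omega) (by omega), ih a ha (by omega), endpointOrders,
            Finset.sum_union, Finset.sum_image, Finset.sum_image]
          · rfl
          · exact List.cons_injective.injOn
          · exact List.cons_injective.injOn
          · simp only [Finset.disjoint_left, Finset.mem_image]
            rintro _ ⟨τ, -, rfl⟩ ⟨τ', -, h⟩
            exact hends (List.cons_eq_cons.1 h).1.symm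
      _ = ∑ σ ∈ endpointOrders u (n + 1) a, suffixWeight w σ := by
          rw [Finset.mul_sum]
          exact Finset.sum_congr rfl fun σ h => (suffixWeight_eq_of_mem_endpointOrders h w).symm

end EndpointOrders

theorem SimpleGraph.Walk.exists_walk_avoiding_of_mem_support {V : Type*} {G : SimpleGraph V}
    {v w x y : V} (p : G.Walk v w) (hx : x ∈ p.support) (hxy : x ≠ y) :
    (∃ q : G.Walk v x, y ∉ q.support) ∨ ∃ q : G.Walk v y, x ∉ q.support := by
  induction p with
  | nil =>
    rw [Walk.support_nil, List.mem_singleton] at hx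
    subst hx
    exact Or.inl ⟨Walk.nil, by simpa using hxy.symm⟩
  | @cons v v' w h p ih =>
    by_cases hvx : v = x
    · subst hvx
      exact Or.inl ⟨Walk.nil, by simpa using hxy.symm⟩
    by_cases hvy : v = y
    · subst hvy
      exact Or.inr ⟨Walk.nil, by simpa using hxy⟩
    rw [Walk.support_cons, List.mem_cons] at hx
    rcases ih (hx.resolve_left (Ne.symm hvx)) with ⟨q, hq⟩ | ⟨q, hq⟩
    · exact Or.inl ⟨Walk.cons h q, by simp [hq, Ne.symm hvy]⟩
    · exact Or.inr ⟨Walk.cons h q, by simp [hq, Ne.symm hvx]⟩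

section PathInTree

variable {V : Type*} {G : SimpleGraph V} {m : ℕ} {u : ℕ → V}

theorem exists_isPath_support_eq_map_range' (hu : Set.InjOn u (Set.Iic (m + 1)))
    (hadj : ∀ i < m + 1, G.Adj (u i) (u (i + 1))) {i j : ℕ} (hij : i ≤ j) (hj : j ≤ m + 1) :
    ∃ p : G.Walk (u i) (u j), p.IsPath ∧ p.support = (List.range' i (j + 1 - i)).map u := by
  obtain ⟨n, rfl⟩ := Nat.exists_eq_add_of_le hij
  rw [show i + n + 1 - i = n + 1 by omega]
  suffices ∃ p : G.Walk (u i) (u (i + n)), p.support = (List.range' i (n + 1)).map u by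
    obtain ⟨p, hp⟩ := this
    refine ⟨p, Walk.IsPath.mk' ?_, hp⟩
    rw [hp]
    refine List.Nodup.map_on (fun k hk l hl hkl => hu ?_ ?_ hkl) List.nodup_range'
    all_goals simp only [List.mem_range'_1] at hk hl; simp only [Set.mem_Iic]; omega
  clear hij
  induction n generalizing i with
  | zero => exact ⟨Walk.nil, by simp⟩
  | succ n ih =>
    obtain ⟨p, hp⟩ := ih (i := i + 1) (by omega)
    refine ⟨(Walk.cons (hadj i (by omega)) p).copy rfl (by rw [add_right_comm, add_assoc]), ?_⟩
    rw [Walk.support_copy, Walk.support_cons, hp, List.range'_succ (s := i), List.map_cons]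

theorem mem_Icc_of_apply_mem_map_range' (hu : Set.InjOn u (Set.Iic (m + 1))) {i j t : ℕ}
    (hj : j ≤ m + 1) (ht : t ≤ m + 1) (h : u t ∈ (List.range' i (j + 1 - i)).map u) :
    t ∈ Set.Icc i j := by
  obtain ⟨s, hs, hst⟩ := List.mem_map.1 h
  rw [List.mem_range'_1] at hs
  have := hu (show s ≤ m + 1 by omega) ht hst
  exact ⟨by omega, by omega⟩

theorem adj_iff_of_isAcyclic (hG : G.IsAcyclic) (hu : Set.InjOn u (Set.Iic (m + 1)))
    (hadj : ∀ i < m + 1, G.Adj (u i) (u (i + 1))) {i j : ℕ} (hi : i ≤ m + 1) (hj : j ≤ m + 1) :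
    G.Adj (u i) (u j) ↔ j = i + 1 ∨ i = j + 1 := by
  have hforward : ∀ {i j}, i < j → j ≤ m + 1 → G.Adj (u i) (u j) → j = i + 1 := by
    intro i j hij hj h
    obtain ⟨p, hp, hsupp⟩ := exists_isPath_support_eq_map_range' hu hadj hij.le hj
    have hedge : (Walk.cons h Walk.nil).IsPath := by simp [h.ne]
    obtain rfl : p = Walk.cons h Walk.nil :=
      congrArg Subtype.val ((hG.subsingleton_path _ _).elim ⟨p, hp⟩ ⟨_, hedge⟩)
    have hlen := congrArg List.length hsupp
    simp only [Walk.support_cons, Walk.support_nil, List.length_cons, List.length_nil,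
      List.length_map, List.length_range'] at hlen
    omega
  constructor
  · intro h
    rcases lt_or_gt_of_ne (fun hij : i = j => h.ne (congrArg u hij)) with hij | hij
    · exact Or.inl (hforward hij hj h)
    · exact Or.inr (hforward hij hi h.symm)
  · rintro (rfl | rfl)
    · exact hadj i (by omega)
    · exact (hadj j (by omega)).symm

theorem onPath_eq_image (hG : G.IsAcyclic) (hu : Set.InjOn u (Set.Iic (m + 1)))
    (hadj : ∀ i < m + 1, G.Adj (u i) (u (i + 1))) :
    onPath G (u 0) (u (m + 1)) = u '' Set.Iic (m + 1) := by
  obtain ⟨P, hP, hsupp⟩ := exists_isPath_support_eq_map_range' hu hadj (Nat.zero_le _) le_rfl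
  have hmem : ∀ v, v ∈ P.support ↔ v ∈ u '' Set.Iic (m + 1) := fun v => by
    simp only [hsupp, List.mem_map, List.mem_range'_1, Set.mem_image, Set.mem_Iic]
    exact exists_congr fun k => and_congr_left fun _ => by omega
  ext v
  refine ⟨fun hv => (hmem v).1 (hv P hP), fun hv p hp => ?_⟩
  obtain rfl : p = P := congrArg Subtype.val ((hG.subsingleton_path _ _).elim ⟨p, hp⟩ ⟨P, hP⟩)
  exact (hmem v).2 hv

theorem pairwiseDisjoint_pairSubtree (hG : G.Connected) (hu : Set.InjOn u (Set.Iic (m + 1)))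
    (hadj : ∀ i < m + 1, G.Adj (u i) (u (i + 1))) :
    (Set.Iic (m + 1)).PairwiseDisjoint fun k => pairSubtree G (u 0) (u (m + 1)) (u k) := by
  intro k hk l hl hkl
  wlog hlt : k < l generalizing k l
  · exact (this hl hk hkl.symm (by omega)).symm
  rw [Function.onFun, Set.disjoint_left]
  intro v hvk hvl
  obtain ⟨down, -, hdown⟩ := exists_isPath_support_eq_map_range' hu hadj (Nat.zero_le k) hk
  obtain ⟨up, -, hup⟩ := exists_isPath_support_eq_map_range' hu hadj hl le_rfl
  have hkl' : u k ≠ u l := fun h => hkl (hu hk hl h)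
  obtain ⟨p⟩ := hG.preconnected v (u 0)
  rcases p.exists_walk_avoiding_of_mem_support (hvk.1 p) hkl' with ⟨q, hq⟩ | ⟨q, hq⟩
  · have := hvl.1 (q.append down.reverse)
    rw [Walk.mem_support_append_iff, Walk.support_reverse, List.mem_reverse] at this
    have := mem_Icc_of_apply_mem_map_range' hu hk hl (hdown ▸ this.resolve_left hq)
    exact absurd this.2 (by omega)
  · have := hvk.2 (q.append up)
    rw [Walk.mem_support_append_iff] at this
    have := mem_Icc_of_apply_mem_map_range' hu le_rfl hk (hup ▸ this.resolve_left hq)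
    exact absurd this.1 (by omega)

theorem segSize_eq_sum [Finite V] (hG : G.Connected) (hu : Set.InjOn u (Set.Iic (m + 1)))
    (hadj : ∀ i < m + 1, G.Adj (u i) (u (i + 1))) {i j : ℕ} (hj : j ≤ m + 1) :
    segSize G (u 0) (u (m + 1)) u i j =
      ∑ k ∈ Finset.Icc i j, (pairSubtree G (u 0) (u (m + 1)) (u k)).ncard := by
  rw [segSize, (Set.finite_Icc i j).ncard_biUnion (fun _ _ => Set.toFinite _)
    ((pairwiseDisjoint_pairSubtree hG hu hadj).subset fun k hk => hk.2.trans hj),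
    ← Finset.coe_Icc, finsum_mem_coe_finset]

theorem mem_sdiff_and_exists_adj_iff (hG : G.IsAcyclic) (hu : Set.InjOn u (Set.Iic (m + 1)))
    (hadj : ∀ i < m + 1, G.Adj (u i) (u (i + 1))) {a n : ℕ} (ha : 1 ≤ a) (hn : a + n ≤ m)
    (x : V) :
    (x ∈ u '' Set.Iic (m + 1) \ u '' (Set.Iic (m + 1) \ Set.Icc a (a + n)) ∧
        ∃ y ∈ u '' (Set.Iic (m + 1) \ Set.Icc a (a + n)), G.Adj y x) ↔
      x = u a ∨ x = u (a + n) := by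
  have hIcc : Set.Icc a (a + n) ⊆ Set.Iic (m + 1) := fun k hk => by simp at hk ⊢; omega
  rw [← hu.image_sdiff_subset Set.sdiff_subset, sdiff_sdiff_right_self, inf_eq_right.2 hIcc]
  constructor
  · rintro ⟨⟨k, hk, rfl⟩, _, ⟨j, ⟨hj, hjI⟩, rfl⟩, hjk⟩
    simp only [Set.mem_Icc, Set.mem_Iic] at hk hj hjI
    have := (adj_iff_of_isAcyclic hG hu hadj hj (by omega)).1 hjk
    rcases (by omega : k = a ∨ k = a + n) with rfl | rfl
    exacts [Or.inl rfl, Or.inr rfl]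
  · rintro (rfl | rfl)
    · refine ⟨⟨a, by simp, rfl⟩, u (a - 1), ⟨a - 1, by simp; omega, rfl⟩, ?_⟩
      simpa [Nat.sub_add_cancel ha] using hadj (a - 1) (by omega)
    · refine ⟨⟨a + n, by simp, rfl⟩, u (a + n + 1), ⟨a + n + 1, by simp; omega, rfl⟩, ?_⟩
      exact (hadj (a + n) (by omega)).symm

theorem not_isInfSeqOn_nil (hG : G.IsAcyclic) (hu : Set.InjOn u (Set.Iic (m + 1)))
    (hadj : ∀ i < m + 1, G.Adj (u i) (u (i + 1))) {a n : ℕ} (ha : 1 ≤ a) (hn : a + n ≤ m) :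
    ¬IsInfSeqOn G (u '' Set.Iic (m + 1)) (u '' (Set.Iic (m + 1) \ Set.Icc a (a + n))) [] := by
  intro h
  obtain ⟨hx, -⟩ := (mem_sdiff_and_exists_adj_iff hG hu hadj ha hn _).2 (Or.inl rfl)
  exact hx.2 (isInfSeqOn_nil_iff.1 h hx.1)

theorem isInfSeqOn_iff_mem_endpointOrders [DecidableEq V] (hG : G.IsAcyclic)
    (hu : Set.InjOn u (Set.Iic (m + 1))) (hadj : ∀ i < m + 1, G.Adj (u i) (u (i + 1)))
    {n a : ℕ} (ha : 1 ≤ a) (hn : a + n ≤ m) {σ : List V} :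
    IsInfSeqOn G (u '' Set.Iic (m + 1)) (u '' (Set.Iic (m + 1) \ Set.Icc a (a + n))) σ ↔
      σ ∈ endpointOrders u n a := by
  have hinsert : ∀ {k : ℕ} {I J : Set ℕ}, insert k (Set.Iic (m + 1) \ I) = Set.Iic (m + 1) \ J →
      insert (u k) (u '' (Set.Iic (m + 1) \ I)) = u '' (Set.Iic (m + 1) \ J) :=
    fun h => by rw [← Set.image_insert_eq, h]
  induction n generalizing a σ with
  | zero =>
    rcases σ with _ | ⟨x, τ⟩
    · exact iff_of_false (not_isInfSeqOn_nil hG hu hadj ha hn)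
        fun h => absurd (length_of_mem_endpointOrders h) (by simp)
    rw [isInfSeqOn_cons_iff, mem_sdiff_and_exists_adj_iff hG hu hadj ha hn]
    have hall := hinsert (k := a) (I := Set.Icc a (a + 0)) (J := ∅) (by ext k; simp; omega)
    rw [Set.sdiff_empty] at hall
    simp only [add_zero, or_self, endpointOrders, Finset.mem_singleton, List.cons.injEq] at hall ⊢
    constructor
    · rintro ⟨rfl, h⟩
      exact ⟨rfl, h.eq_nil_of_subset hall.ge⟩
    · rintro ⟨rfl, rfl⟩
      exact ⟨rfl, isInfSeqOn_nil_iff.2 hall.ge⟩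
  | succ n ih =>
    rcases σ with _ | ⟨x, τ⟩
    · exact iff_of_false (not_isInfSeqOn_nil hG hu hadj ha hn)
        fun h => absurd (length_of_mem_endpointOrders h) (by simp)
    rw [isInfSeqOn_cons_iff, mem_sdiff_and_exists_adj_iff hG hu hadj ha hn]
    simp only [endpointOrders, Finset.mem_union, Finset.mem_image, List.cons.injEq, or_and_right]
    have hleft := hinsert (k := a) (I := Set.Icc a (a + (n + 1)))
      (J := Set.Icc (a + 1) (a + 1 + n)) (by ext k; simp; omega)
    have hright := hinsert (k := a + (n + 1)) (I := Set.Icc a (a + (n + 1)))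
      (J := Set.Icc a (a + n)) (by ext k; simp; omega)
    refine or_congr ⟨?_, ?_⟩ ⟨?_, ?_⟩
    · rintro ⟨rfl, h⟩
      exact ⟨τ, (ih (by omega) (by omega)).1 (hleft ▸ h), rfl, rfl⟩
    · rintro ⟨τ, hτ, rfl, rfl⟩
      exact ⟨rfl, hleft ▸ (ih (by omega) (by omega)).2 hτ⟩
    · rintro ⟨rfl, h⟩
      exact ⟨τ, (ih ha (by omega)).1 (hright ▸ h), rfl, rfl⟩
    · rintro ⟨τ, hτ, rfl, rfl⟩
      exact ⟨rfl, hright ▸ (ih ha (by omega)).2 hτ⟩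

theorem setOf_isInfSeqOn_reverse_eq [DecidableEq V] (hG : G.IsAcyclic)
    (hu : Set.InjOn u (Set.Iic (m + 1))) (hadj : ∀ i < m + 1, G.Adj (u i) (u (i + 1)))
    (hm : 1 ≤ m) :
    {ξ : List V | IsInfSeqOn G (onPath G (u 0) (u (m + 1))) {u 0, u (m + 1)} ξ.reverse} =
      ↑((endpointOrders u (m - 1) 1).image List.reverse) := by
  have hsources : ({u 0, u (m + 1)} : Set V) =
      u '' (Set.Iic (m + 1) \ Set.Icc 1 (1 + (m - 1))) := by
    rw [← Set.image_pair]
    congr 1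
    ext k
    simp only [Set.mem_insert_iff, Set.mem_singleton_iff, Set.mem_sdiff, Set.mem_Iic,
      Set.mem_Icc]
    omega
  rw [Finset.coe_image, List.reverse_involutive.image_eq_preimage_symm]
  ext ξ
  rw [Set.mem_ofPred_eq, onPath_eq_image hG hu hadj, hsources,
    isInfSeqOn_iff_mem_endpointOrders hG hu hadj le_rfl (by omega)]
  rfl

end PathInTree

theorem q_recursion_eq_sum_general {V : Type*} [Fintype V] (G : SimpleGraph V)
    (hG : G.IsTree) (s₁ s₂ : V) (m : ℕ) (hm : 1 ≤ m) (u : ℕ → V)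
    (hu0 : u 0 = s₁) (hum : u (m + 1) = s₂)
    (huinj : ∀ i ≤ m + 1, ∀ j ≤ m + 1, u i = u j → i = j)
    (huadj : ∀ i < m + 1, G.Adj (u i) (u (i + 1)))
    (q : ℕ → ℕ → ℝ)
    (hq1 : ∀ i, 1 ≤ i → i ≤ m → q i i = ((pairSubtree G s₁ s₂ (u i)).ncard : ℝ)⁻¹)
    (hq2 : ∀ i j, 1 ≤ i → i < j → j ≤ m →
      q i j = ((segSize G s₁ s₂ u i j : ℝ))⁻¹ * (q (i + 1) j + q i (j - 1))) :
    q 1 m = ∑ᶠ ξ ∈ {ξ : List V | IsInfSeqOn G (onPath G s₁ s₂) {s₁, s₂} ξ.reverse},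
      ∏ i ∈ Finset.range m, ((Ifun G s₁ s₂ ξ (i + 1) : ℝ))⁻¹ := by
  classical
  subst hu0 hum
  have hu : Set.InjOn u (Set.Iic (m + 1)) := fun i hi j hj h => huinj i hi j hj h
  have hrec := sum_suffixWeight_endpointOrders u
    (fun v => (pairSubtree G (u 0) (u (m + 1)) v).ncard) q
    (hu.mono fun k hk => hk.2.trans m.le_succ) hq1
    (fun i j hi hij hj => by
      rw [hq2 i j hi hij hj, segSize_eq_sum hG.connected hu huadj (by omega)])
    (m - 1) 1 le_rfl (by omega)
  rw [show 1 + (m - 1) = m by omega] at hrec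
  rw [hrec, setOf_isInfSeqOn_reverse_eq hG.isAcyclic hu huadj hm, finsum_mem_coe_finset,
    Finset.sum_image List.reverse_injective.injOn]
  refine Finset.sum_congr rfl fun σ hσ => ?_
  rw [prod_inv_Ifun_eq_suffixWeight_reverse G _ _ (by
    rw [List.length_reverse, length_of_mem_endpointOrders hσ]; omega), List.reverse_reverse]

/-- Lemma 2 (second part): the function `q` defined by the recursion
`q(v,v) = |T_v|⁻¹`, `q(u_i,u_j) = |T_{ρ(u_i,u_j)}|⁻¹ (q(u_{i+1},u_j) + q(u_i,u_{j-1}))`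
equals the sum over reverse infection sequences `ξ` of the path of `∏ I_i(ξ)⁻¹`. -/
theorem q_recursion_eq_sum {V : Type*} [Fintype V] (G : SimpleGraph V)
    (hG : G.IsTree) (s₁ s₂ : V) (hne : s₁ ≠ s₂) (m : ℕ) (hm : 1 ≤ m) (u : ℕ → V)
    (hu0 : u 0 = s₁) (hum : u (m + 1) = s₂)
    (huinj : ∀ i ≤ m + 1, ∀ j ≤ m + 1, u i = u j → i = j)
    (huadj : ∀ i < m + 1, G.Adj (u i) (u (i + 1)))
    (q : ℕ → ℕ → ℝ)
    (hq1 : ∀ i, 1 ≤ i → i ≤ m → q i i = ((pairSubtree G s₁ s₂ (u i)).ncard : ℝ)⁻¹)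
    (hq2 : ∀ i j, 1 ≤ i → i < j → j ≤ m →
      q i j = ((segSize G s₁ s₂ u i j : ℝ))⁻¹ * (q (i + 1) j + q i (j - 1))) :
    q 1 m = ∑ᶠ ξ ∈ {ξ : List V | IsInfSeqOn G (onPath G s₁ s₂) {s₁, s₂} ξ.reverse},
      ∏ i ∈ Finset.range m, ((Ifun G s₁ s₂ ξ (i + 1) : ℝ))⁻¹ :=
  q_recursion_eq_sum_general G hG s₁ s₂ m hm u hu0 hum huinj huadj q hq1 hq2
end

section
/- Let T be a finite tree on n vertices, s_1 ≠ s_2 adjacent to the path endpoints, with path ρ(s_1,s_2) having p = m+2 vertices. With I*_i(s_1,s_2) defined as the sum of the sizes of the i largest subtrees among {T_u(s_1,s_2) : u ∈ ρ(s_1,s_2)}, and with any ordering ξ ∈ Γ(u_1,u_m) of the interior path vertices whose reversal is an infection sequence, one has for each i: I_i(ξ; s_1,s_2) ≤ I*_i(s_1,s_2), so that ∏_{i=1}^m I_i(ξ; s_1,s_2)^{-1} ≥ ∏_{i=1}^m I*_i(s_1,s_2)^{-1}. Consequently q(u_1,u_m; s_1,s_2) = Σ_{ξ ∈ Γ} ∏_i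 I_i(ξ)^{-1} ≥ 2^{m-1} ∏_{i=1}^m I*_i(s_1,s_2)^{-1}. -/
/-- `I*_i(s₁,s₂)`: the sum of the sizes of the `i` largest subtrees among
`{T_{u k}(s₁,s₂) : 0 ≤ k ≤ m+1}` (maximum over all `i`-subsets of path indices). -/
noncomputable def Istar {V : Type*} (G : SimpleGraph V) (s₁ s₂ : V) (u : ℕ → V)
    (m i : ℕ) : ℕ :=
  ((Finset.Icc 0 (m + 1)).powersetCard i).sup
    (fun T => ∑ k ∈ T, (pairSubtree G s₁ s₂ (u k)).ncard)


open SimpleGraph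

/-- Walk along a chain of adjacent vertices. -/
def chainWalk {V : Type*} (G : SimpleGraph V) (u : ℕ → V) :
    ∀ n, (∀ i < n, G.Adj (u i) (u (i + 1))) → G.Walk (u 0) (u n)
  | 0, _ => SimpleGraph.Walk.nil
  | n + 1, h => (chainWalk G u n fun i hi => h i (Nat.lt_succ_of_lt hi)).concat
      (h n (Nat.lt_succ_self n))

lemma chainWalk_support {V : Type*} (G : SimpleGraph V) (u : ℕ → V) :
    ∀ n (h : ∀ i < n, G.Adj (u i) (u (i + 1))) (v : V),
      v ∈ (chainWalk G u n h).support ↔ ∃ k ≤ n, v = u k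
  | 0, h, v => by
    simp [chainWalk, eq_comm]
  | n + 1, h, v => by
    rw [chainWalk, SimpleGraph.Walk.support_concat,
      List.mem_append]
    rw [chainWalk_support G u n _ v]
    simp only [List.mem_singleton]
    constructor
    · rintro (⟨k, hk, rfl⟩ | rfl)
      · exact ⟨k, by omega, rfl⟩
      · exact ⟨n + 1, le_rfl, rfl⟩
    · rintro ⟨k, hk, rfl⟩
      rcases Nat.lt_or_ge k (n + 1) with hlt | hge
      · exact Or.inl ⟨k, by omega, rfl⟩
      · right; congr 1; omega

lemma chainWalk_isPath {V : Type*} (G : SimpleGraph V) (u : ℕ → V) :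
    ∀ n (h : ∀ i < n, G.Adj (u i) (u (i + 1)))
      (hinj : ∀ i ≤ n, ∀ j ≤ n, u i = u j → i = j),
      (chainWalk G u n h).IsPath
  | 0, h, hinj => by simp [chainWalk]
  | n + 1, h, hinj => by
    rw [SimpleGraph.Walk.isPath_def, chainWalk, SimpleGraph.Walk.support_concat,
      List.nodup_append']
    refine ⟨?_, List.nodup_singleton _, ?_⟩
    · exact (chainWalk_isPath G u n _ fun i hi j hj hij =>
        hinj i (by omega) j (by omega) hij).support_nodup
    · intro a ha hb
      simp only [List.mem_singleton] at hb
      subst hb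
      rw [chainWalk_support] at ha
      obtain ⟨k, hk, hk'⟩ := ha
      have := hinj (n + 1) le_rfl k (by omega) hk'
      omega

/-- Index sequence obtained by infecting a discrete interval from both ends. -/
def buildSeq : List Bool → ℕ → ℕ → List ℕ
  | [], l, _r => [l]
  | true :: bs, l, r => l :: buildSeq bs (l + 1) r
  | false :: bs, l, r => r :: buildSeq bs l (r - 1)

lemma buildSeq_mem :
    ∀ (bs : List Bool) (l r : ℕ), bs.length = r - l → l ≤ r →
      ∀ k, k ∈ buildSeq bs l r ↔ l ≤ k ∧ k ≤ r
  | [], l, r, hlen, hlr, k => by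
    simp only [List.length_nil] at hlen
    simp only [buildSeq, List.mem_singleton]
    omega
  | true :: bs, l, r, hlen, hlr, k => by
    simp only [List.length_cons] at hlen
    rw [buildSeq, List.mem_cons, buildSeq_mem bs (l + 1) r (by omega) (by omega)]
    omega
  | false :: bs, l, r, hlen, hlr, k => by
    simp only [List.length_cons] at hlen
    rw [buildSeq, List.mem_cons, buildSeq_mem bs l (r - 1) (by omega) (by omega)]
    omega

lemma buildSeq_nodup :
    ∀ (bs : List Bool) (l r : ℕ), bs.length = r - l → l ≤ r →
      (buildSeq bs l r).Nodup
  | [], l, r, hlen, hlr => List.nodup_singleton _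
  | true :: bs, l, r, hlen, hlr => by
    simp only [List.length_cons] at hlen
    rw [buildSeq, List.nodup_cons]
    refine ⟨fun hmem => ?_, buildSeq_nodup bs (l + 1) r (by omega) (by omega)⟩
    rw [buildSeq_mem bs (l + 1) r (by omega) (by omega)] at hmem
    omega
  | false :: bs, l, r, hlen, hlr => by
    simp only [List.length_cons] at hlen
    rw [buildSeq, List.nodup_cons]
    refine ⟨fun hmem => ?_, buildSeq_nodup bs l (r - 1) (by omega) (by omega)⟩
    rw [buildSeq_mem bs l (r - 1) (by omega) (by omega)] at hmem
    omega

lemma buildSeq_inj :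
    ∀ (bs bs' : List Bool) (l r : ℕ), bs.length = r - l → bs'.length = r - l →
      l ≤ r → buildSeq bs l r = buildSeq bs' l r → bs = bs'
  | [], [], _, _, _, _, _, _ => rfl
  | [], b' :: bs', l, r, hlen, hlen', hlr, _ => by
    simp only [List.length_nil, List.length_cons] at hlen hlen'; omega
  | b :: bs, [], l, r, hlen, hlen', hlr, _ => by
    simp only [List.length_nil, List.length_cons] at hlen hlen'; omega
  | true :: bs, true :: bs', l, r, hlen, hlen', hlr, heq => by
    simp only [List.length_cons] at hlen hlen'
    rw [buildSeq, buildSeq, List.cons_eq_cons] at heq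
    rw [buildSeq_inj bs bs' (l + 1) r (by omega) (by omega) (by omega) heq.2]
  | false :: bs, false :: bs', l, r, hlen, hlen', hlr, heq => by
    simp only [List.length_cons] at hlen hlen'
    rw [buildSeq, buildSeq, List.cons_eq_cons] at heq
    rw [buildSeq_inj bs bs' l (r - 1) (by omega) (by omega) (by omega) heq.2]
  | true :: bs, false :: bs', l, r, hlen, hlen', hlr, heq => by
    simp only [List.length_cons] at hlen hlen'
    rw [buildSeq, buildSeq, List.cons_eq_cons] at heq
    omega
  | false :: bs, true :: bs', l, r, hlen, hlen', hlr, heq => by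
    simp only [List.length_cons] at hlen hlen'
    rw [buildSeq, buildSeq, List.cons_eq_cons] at heq
    omega

lemma buildSeq_infect {V : Type*} (G : SimpleGraph V) (u : ℕ → V) (m : ℕ)
    (huadj : ∀ i < m + 1, G.Adj (u i) (u (i + 1))) :
    ∀ (bs : List Bool) (l r : ℕ), bs.length = r - l → 1 ≤ l → l ≤ r → r ≤ m →
      ∀ (P : Set V), u (l - 1) ∈ P → u (r + 1) ∈ P →
      ∀ i (h : i < ((buildSeq bs l r).map u).length),
        ∃ w, (w ∈ P ∨ w ∈ ((buildSeq bs l r).map u).take i) ∧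
          G.Adj w (((buildSeq bs l r).map u)[i])
  | [], l, r, hlen, hl, hlr, hr, P, hPl, hPr, i, h => by
    simp only [buildSeq, List.map_cons, List.map_nil, List.length_cons,
      List.length_nil] at h ⊢
    interval_cases i
    refine ⟨u (l - 1), Or.inl hPl, ?_⟩
    have h1 : l - 1 + 1 = l := by omega
    have := huadj (l - 1) (by omega)
    rwa [h1] at this
  | true :: bs, l, r, hlen, hl, hlr, hr, P, hPl, hPr, i, h => by
    simp only [List.length_cons] at hlen
    have hlr' : l < r := by omega
    simp only [buildSeq] at h ⊢
    match i with
    | 0 =>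
      refine ⟨u (l - 1), Or.inl hPl, ?_⟩
      have h1 : l - 1 + 1 = l := by omega
      have := huadj (l - 1) (by omega)
      rw [h1] at this
      simpa using this
    | j + 1 =>
      simp only [List.map_cons, List.length_cons] at h
      obtain ⟨w, hw, hadj⟩ := buildSeq_infect G u m huadj bs (l + 1) r (by omega)
        (by omega) (by omega) hr (insert (u l) P)
        (by simpa using Set.mem_insert (u l) P) (Set.mem_insert_of_mem _ hPr) j (by omega)
      refine ⟨w, ?_, by simpa using hadj⟩
      rcases hw with hw | hw
      · rcases Set.mem_insert_iff.mp hw with rfl | hw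
        · exact Or.inr (by simp [List.take_succ_cons])
        · exact Or.inl hw
      · exact Or.inr (by simp [List.take_succ_cons, hw])
  | false :: bs, l, r, hlen, hl, hlr, hr, P, hPl, hPr, i, h => by
    simp only [List.length_cons] at hlen
    have hlr' : l < r := by omega
    simp only [buildSeq] at h ⊢
    match i with
    | 0 =>
      refine ⟨u (r + 1), Or.inl hPr, ?_⟩
      have := (huadj r (by omega)).symm
      simpa using this
    | j + 1 =>
      simp only [List.map_cons, List.length_cons] at h
      obtain ⟨w, hw, hadj⟩ := buildSeq_infect G u m huadj bs l (r - 1) (by omega)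
        hl (by omega) (by omega) (insert (u r) P)
        (Set.mem_insert_of_mem _ hPl)
        (by rw [show r - 1 + 1 = r by omega]; exact Set.mem_insert (u r) P) j (by omega)
      refine ⟨w, ?_, by simpa using hadj⟩
      rcases hw with hw | hw
      · rcases Set.mem_insert_iff.mp hw with rfl | hw
        · exact Or.inr (by simp [List.take_succ_cons])
        · exact Or.inl hw
      · exact Or.inr (by simp [List.take_succ_cons, hw])

lemma mem_pairSubtree_self {V : Type*} (G : SimpleGraph V) (s₁ s₂ v : V) :
    v ∈ pairSubtree G s₁ s₂ v :=
  ⟨fun p => p.start_mem_support, fun p => p.start_mem_support⟩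

/-- For each reverse infection sequence `ξ` of the path and each `i`,
`I_i(ξ) ≤ I*_i`; consequently
`q(u₁,u_m) = Σ_{ξ ∈ Γ} ∏ I_i(ξ)⁻¹ ≥ 2^{m−1} ∏ I*_i⁻¹`. -/
theorem Ifun_le_Istar_and_q_lower_bound {V : Type*} [Fintype V] (G : SimpleGraph V)
    (hG : G.IsTree) (s₁ s₂ : V) (hne : s₁ ≠ s₂) (m : ℕ) (hm : 1 ≤ m) (u : ℕ → V)
    (hu0 : u 0 = s₁) (hum : u (m + 1) = s₂)
    (huinj : ∀ i ≤ m + 1, ∀ j ≤ m + 1, u i = u j → i = j)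
    (huadj : ∀ i < m + 1, G.Adj (u i) (u (i + 1))) :
    (∀ ξ ∈ {ξ : List V | IsInfSeqOn G (onPath G s₁ s₂) {s₁, s₂} ξ.reverse},
      ∀ i ≤ m, Ifun G s₁ s₂ ξ i ≤ Istar G s₁ s₂ u m i) ∧
    (∑ᶠ ξ ∈ {ξ : List V | IsInfSeqOn G (onPath G s₁ s₂) {s₁, s₂} ξ.reverse},
        ∏ i ∈ Finset.range m, ((Ifun G s₁ s₂ ξ (i + 1) : ℝ))⁻¹)
      ≥ 2 ^ (m - 1) * ∏ i ∈ Finset.range m, ((Istar G s₁ s₂ u m (i + 1) : ℝ))⁻¹ := by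
  classical
  set Γ : Set (List V) :=
    {ξ : List V | IsInfSeqOn G (onPath G s₁ s₂) {s₁, s₂} ξ.reverse} with hΓdef
  set g : V → ℕ := fun v => (pairSubtree G s₁ s₂ v).ncard with hgdef
  have hgpos : ∀ v, 0 < g v := fun v =>
    (Set.ncard_pos (Set.toFinite _)).mpr ⟨v, mem_pairSubtree_self G s₁ s₂ v⟩
  -- the canonical path
  set W : G.Walk s₁ s₂ := (chainWalk G u (m + 1) huadj).copy hu0 hum with hWdef
  have hWpath : W.IsPath := by
    rw [hWdef, SimpleGraph.Walk.isPath_copy]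
    exact chainWalk_isPath G u (m + 1) huadj huinj
  have hWsupp : ∀ v, v ∈ W.support ↔ ∃ k ≤ m + 1, v = u k := by
    intro v
    rw [hWdef, SimpleGraph.Walk.support_copy]
    exact chainWalk_support G u (m + 1) huadj v
  have honPath : ∀ v, v ∈ onPath G s₁ s₂ ↔ ∃ k ≤ m + 1, v = u k := by
    intro v
    constructor
    · intro hv
      exact (hWsupp v).mp (hv W hWpath)
    · rintro ⟨k, hk, rfl⟩ p hp
      have : p = W := (hG.existsUnique_path s₁ s₂).unique hp hWpath
      subst this
      exact (hWsupp (u k)).mpr ⟨k, hk, rfl⟩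
  have hInterior : ∀ v, v ∈ onPath G s₁ s₂ \ {s₁, s₂} ↔
      ∃ k, 1 ≤ k ∧ k ≤ m ∧ v = u k := by
    intro v
    constructor
    · rintro ⟨h1, h2⟩
      obtain ⟨k, hk, rfl⟩ := (honPath v).mp h1
      simp only [Set.mem_insert_iff, Set.mem_singleton_iff, not_or] at h2
      refine ⟨k, ?_, ?_, rfl⟩
      · rcases Nat.eq_zero_or_pos k with rfl | h
        · exact absurd hu0 h2.1
        · exact h
      · by_contra h
        have : k = m + 1 := by omega
        subst this
        exact h2.2 hum
    · rintro ⟨k, h1, h2, rfl⟩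
      refine ⟨(honPath _).mpr ⟨k, by omega, rfl⟩, ?_⟩
      simp only [Set.mem_insert_iff, Set.mem_singleton_iff, not_or]
      constructor
      · rw [← hu0]; intro h
        have := huinj k (by omega) 0 (by omega) h
        omega
      · rw [← hum]; intro h
        have := huinj k (by omega) (m + 1) (by omega) h
        omega
  -- facts about members of Γ
  have hmemξ : ∀ ξ ∈ Γ, ∀ v, v ∈ ξ ↔ ∃ k, 1 ≤ k ∧ k ≤ m ∧ v = u k := by
    intro ξ hξ v
    rw [← List.mem_reverse, hξ.2.1 v]
    exact hInterior v
  have hnodupξ : ∀ ξ ∈ Γ, ξ.Nodup := fun ξ hξ => List.nodup_reverse.mp hξ.1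
  have hlenξ : ∀ ξ ∈ Γ, ξ.length = m := by
    intro ξ hξ
    have htf : ξ.toFinset = (Finset.Icc 1 m).image u := by
      ext v
      simp only [List.mem_toFinset, Finset.mem_image, Finset.mem_Icc]
      rw [hmemξ ξ hξ v]
      constructor
      · rintro ⟨k, h1, h2, rfl⟩; exact ⟨k, ⟨h1, h2⟩, rfl⟩
      · rintro ⟨k, ⟨h1, h2⟩, rfl⟩; exact ⟨k, h1, h2, rfl⟩
    have hinj : Set.InjOn u (Finset.Icc 1 m) := by
      intro a ha b hb hab
      simp only [Finset.coe_Icc, Set.mem_Icc] at ha hb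
      exact huinj a (by omega) b (by omega) hab
    rw [← List.toFinset_card_of_nodup (hnodupξ ξ hξ), htf,
      Finset.card_image_of_injOn hinj, Nat.card_Icc]
    omega
  -- Part 1
  have part1 : ∀ ξ ∈ Γ, ∀ i ≤ m, Ifun G s₁ s₂ ξ i ≤ Istar G s₁ s₂ u m i := by
    intro ξ hξ i hi
    set L : List V := ξ.take i with hLdef
    have hLnodup : L.Nodup := (List.take_sublist i ξ).nodup (hnodupξ ξ hξ)
    set T : Finset ℕ := (Finset.Icc 1 m).filter (fun k => u k ∈ L.toFinset) with hTdef
    have hTsub : T ⊆ Finset.Icc 1 m := Finset.filter_subset _ _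
    have hinjT : Set.InjOn u T := by
      intro a ha b hb hab
      have ha' := Finset.mem_Icc.mp (hTsub ha)
      have hb' := Finset.mem_Icc.mp (hTsub hb)
      exact huinj a (by omega) b (by omega) hab
    have himg : T.image u = L.toFinset := by
      ext v
      simp only [Finset.mem_image]
      constructor
      · rintro ⟨k, hk, rfl⟩
        exact (Finset.mem_filter.mp hk).2
      · intro hv
        have hvξ : v ∈ ξ := List.mem_of_mem_take (List.mem_toFinset.mp hv)
        obtain ⟨k, h1, h2, rfl⟩ := (hmemξ ξ hξ v).mp hvξ
        exact ⟨k, Finset.mem_filter.mpr ⟨Finset.mem_Icc.mpr ⟨h1, h2⟩, hv⟩, rfl⟩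
    have hcardT : T.card = i := by
      have := Finset.card_image_of_injOn hinjT
      rw [himg, List.toFinset_card_of_nodup hLnodup, hLdef, List.length_take,
        hlenξ ξ hξ] at this
      omega
    have hsum : Ifun G s₁ s₂ ξ i = ∑ k ∈ T, g (u k) := by
      have h1 : Ifun G s₁ s₂ ξ i = (L.map g).sum := rfl
      rw [h1, ← List.sum_toFinset g hLnodup, ← himg,
        Finset.sum_image fun a ha b hb hab => hinjT ha hb hab]
    rw [hsum]
    have hmemT : T ∈ (Finset.Icc 0 (m + 1)).powersetCard i :=
      Finset.mem_powersetCard.mpr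
        ⟨hTsub.trans (Finset.Icc_subset_Icc (Nat.zero_le _) (Nat.le_succ m)), hcardT⟩
    exact Finset.le_sup (f := fun T => ∑ k ∈ T, (pairSubtree G s₁ s₂ (u k)).ncard) hmemT
  -- positivity
  have hIfunpos : ∀ ξ ∈ Γ, ∀ i < m, 0 < Ifun G s₁ s₂ ξ (i + 1) := by
    intro ξ hξ i hi
    have hlen : (ξ.take (i + 1)).length = i + 1 := by
      rw [List.length_take, hlenξ ξ hξ]; omega
    have hne' : ξ.take (i + 1) ≠ [] := by
      intro h; rw [h] at hlen; simp at hlen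
    obtain ⟨v, hv⟩ := List.exists_mem_of_ne_nil _ hne'
    have h1 : g v ≤ Ifun G s₁ s₂ ξ (i + 1) :=
      List.single_le_sum (fun x _ => Nat.zero_le x) _ (List.mem_map_of_mem (f := g) hv)
    exact lt_of_lt_of_le (hgpos v) h1
  have hIstarpos : ∀ i < m, 0 < Istar G s₁ s₂ u m (i + 1) := by
    intro i hi
    have hmem : Finset.Icc 1 (i + 1) ∈ (Finset.Icc 0 (m + 1)).powersetCard (i + 1) := by
      refine Finset.mem_powersetCard.mpr ⟨Finset.Icc_subset_Icc (Nat.zero_le _) (by omega), ?_⟩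
      rw [Nat.card_Icc]
      omega
    refine lt_of_lt_of_le ?_ (Finset.le_sup hmem)
    refine Finset.sum_pos (fun k _ => hgpos (u k)) ⟨1, Finset.mem_Icc.mpr ⟨le_rfl, by omega⟩⟩
  set P : ℝ := ∏ i ∈ Finset.range m, ((Istar G s₁ s₂ u m (i + 1) : ℝ))⁻¹ with hPdef
  have hPnonneg : 0 ≤ P :=
    Finset.prod_nonneg fun i _ => inv_nonneg.mpr (Nat.cast_nonneg _)
  have hterm : ∀ ξ ∈ Γ, P ≤ ∏ i ∈ Finset.range m, ((Ifun G s₁ s₂ ξ (i + 1) : ℝ))⁻¹ := by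
    intro ξ hξ
    refine Finset.prod_le_prod (fun i _ => inv_nonneg.mpr (Nat.cast_nonneg _)) ?_
    intro i hi
    rw [Finset.mem_range] at hi
    refine inv_anti₀ ?_ ?_
    · exact_mod_cast hIfunpos ξ hξ i hi
    · exact_mod_cast part1 ξ hξ (i + 1) (by omega)
  -- the injection from boolean sequences
  set F : (Fin (m - 1) → Bool) → List V :=
    fun b => ((buildSeq (List.ofFn b) 1 m).map u).reverse with hFdef
  have hblen : ∀ b : Fin (m - 1) → Bool, (List.ofFn b).length = m - 1 :=
    fun b => List.length_ofFn
  have hFmem : ∀ b, F b ∈ Γ := by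
    intro b
    have hrev : (F b).reverse = (buildSeq (List.ofFn b) 1 m).map u :=
      List.reverse_reverse _
    show IsInfSeqOn G (onPath G s₁ s₂) {s₁, s₂} (F b).reverse
    rw [hrev]
    have hbm : (List.ofFn b).length = m - 1 := hblen b
    have h1m : (1 : ℕ) ≤ m := hm
    refine ⟨?_, ?_, ?_⟩
    · refine List.Nodup.map_on ?_ (buildSeq_nodup _ 1 m (by rw [hbm]) h1m)
      intro x hx y hy hxy
      rw [buildSeq_mem _ 1 m (by rw [hbm]) h1m] at hx hy
      exact huinj x (by omega) y (by omega) hxy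
    · intro v
      rw [hInterior v]
      simp only [List.mem_map]
      constructor
      · rintro ⟨k, hk, rfl⟩
        rw [buildSeq_mem _ 1 m (by rw [hbm]) h1m] at hk
        exact ⟨k, hk.1, hk.2, rfl⟩
      · rintro ⟨k, h1, h2, rfl⟩
        exact ⟨k, (buildSeq_mem _ 1 m (by rw [hbm]) h1m k).mpr ⟨h1, h2⟩, rfl⟩
    · intro i h
      refine buildSeq_infect G u m huadj _ 1 m (by rw [hbm]) le_rfl h1m le_rfl
        {s₁, s₂} ?_ ?_ i h
      · simp only [Nat.sub_self]
        rw [hu0]; exact Set.mem_insert _ _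
      · rw [hum]; exact Set.mem_insert_of_mem _ rfl
  have hmapinj : ∀ A B : List ℕ, (∀ k ∈ A, k ≤ m + 1) → (∀ k ∈ B, k ≤ m + 1) →
      A.map u = B.map u → A = B := by
    intro A
    induction A with
    | nil =>
      intro B _ _ h
      cases B with
      | nil => rfl
      | cons b B => simp at h
    | cons a A ih =>
      intro B hA hB h
      cases B with
      | nil => simp at h
      | cons b B =>
        simp only [List.map_cons, List.cons_eq_cons] at h
        have := huinj a (hA a List.mem_cons_self) b
          (hB b List.mem_cons_self) h.1
        rw [this, ih B (fun k hk => hA k (List.mem_cons_of_mem a hk))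
          (fun k hk => hB k (List.mem_cons_of_mem b hk)) h.2]
  have hFinj : Function.Injective F := by
    intro b b' heq
    have h2 : (buildSeq (List.ofFn b) 1 m).map u
        = (buildSeq (List.ofFn b') 1 m).map u := by
      have := congrArg List.reverse heq
      rwa [List.reverse_reverse, List.reverse_reverse] at this
    have h3 : buildSeq (List.ofFn b) 1 m = buildSeq (List.ofFn b') 1 m := by
      refine hmapinj _ _ ?_ ?_ h2
      · intro k hk
        rw [buildSeq_mem _ 1 m (by rw [hblen b]) hm] at hk
        omega
      · intro k hk
        rw [buildSeq_mem _ 1 m (by rw [hblen b']) hm] at hk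
        omega
    have h4 := buildSeq_inj _ _ 1 m (by rw [hblen b])
      (by rw [hblen b']) hm h3
    exact List.ofFn_injective h4
  -- finiteness and cardinality
  have hΓfin : Γ.Finite :=
    Set.Finite.subset (List.finite_length_eq V m) (fun ξ hξ => hlenξ ξ hξ)
  have hsubset : Finset.univ.image F ⊆ hΓfin.toFinset := by
    intro ξ hξ
    obtain ⟨b, _, rfl⟩ := Finset.mem_image.mp hξ
    exact hΓfin.mem_toFinset.mpr (hFmem b)
  have hcard : 2 ^ (m - 1) ≤ hΓfin.toFinset.card := by
    calc 2 ^ (m - 1) = Fintype.card (Fin (m - 1) → Bool) := by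
          simp [Fintype.card_fun]
      _ = (Finset.univ.image F).card :=
          (Finset.card_image_of_injective Finset.univ hFinj).symm
      _ ≤ hΓfin.toFinset.card := Finset.card_le_card hsubset
  refine ⟨part1, ?_⟩
  have hcoe : Γ = ↑hΓfin.toFinset := (Set.Finite.coe_toFinset hΓfin).symm
  rw [ge_iff_le, hcoe, finsum_mem_coe_finset]
  have hlow : (hΓfin.toFinset.card : ℝ) * P ≤
      ∑ ξ ∈ hΓfin.toFinset, ∏ i ∈ Finset.range m, ((Ifun G s₁ s₂ ξ (i + 1) : ℝ))⁻¹ := by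
    have := Finset.card_nsmul_le_sum hΓfin.toFinset
      (fun ξ => ∏ i ∈ Finset.range m, ((Ifun G s₁ s₂ ξ (i + 1) : ℝ))⁻¹) P
      (fun ξ hξ => hterm ξ (hΓfin.mem_toFinset.mp hξ))
    simpa [nsmul_eq_mul] using this
  refine le_trans ?_ hlow
  have h2m : ((2 : ℝ)) ^ (m - 1) ≤ (hΓfin.toFinset.card : ℝ) := by
    exact_mod_cast hcard
  exact mul_le_mul_of_nonneg_right h2m hPnonneg
end

section
/- In the setting of a path of m interior vertices between two sources where the last r > ⌈m/2⌉ vertices closest to one source are assigned color i and the rest color j (a coloring/partition of the path): the number of infection orderings of the path consistent with a split where the first r positions (from source i's side) have color i equals C(m, r) times the fixed per-ordering probability factor; hence the coloring with r = ⌈m/2⌉ maximizes the count of consistent infection sequences over all contiguous colorings, since C(m, ⌈m/2⌉) ≥ C(m, r) for all r. Consequently the Voronoi (balanced) split of each source-to-source path maximizes the partition posterior P(A_n | S, G_n). -/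
/-- The interior vertices of the path colored from source `s₁`'s side (indices
`1, …, r`), listed in increasing order (the required infection order within
that color class). -/
def leftList (m r : ℕ) : List (Fin (m + 2)) :=
  (List.finRange (m + 2)).filter (fun v => decide (1 ≤ v.val ∧ v.val ≤ r))

/-- The interior vertices colored from source `s₂`'s side (indices `r+1, …, m`),
listed in decreasing order. -/
def rightList (m r : ℕ) : List (Fin (m + 2)) :=
  ((List.finRange (m + 2)).filter (fun v => decide (r + 1 ≤ v.val ∧ v.val ≤ m))).reverse

/-- The number of infection sequences of the path from its two endpoints that are
consistent with the contiguous coloring in which the `r` vertices nearest `s₁` are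
colored `i` (i.e. each color class is infected in order from its source). -/
noncomputable def pathColoringCount (m r : ℕ) : ℕ :=
  Set.ncard {σ : List (Fin (m + 2)) |
    IsInfSeqOn (SimpleGraph.pathGraph (m + 2)) Set.univ {0, Fin.last (m + 1)} σ ∧
    σ.filter (fun v => decide (v.val ≤ r)) = leftList m r ∧
    σ.filter (fun v => decide (r < v.val)) = rightList m r}

namespace List

variable {α : Type*}

def shuffles : List α → List α → List (List α)
  | [], r => [r]
  | a :: l, [] => [a :: l]
  | a :: l, b :: r =>
      (shuffles l (b :: r)).map (a :: ·) ++ (shuffles (a :: l) r).map (b :: ·)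

@[simp] theorem shuffles_nil_left (r : List α) : shuffles [] r = [r] := by
  simp [shuffles]

@[simp] theorem shuffles_nil_right (l : List α) : shuffles l [] = [l] := by
  cases l <;> simp [shuffles]

theorem shuffles_cons_cons (a b : α) (l r : List α) :
    shuffles (a :: l) (b :: r) =
      (shuffles l (b :: r)).map (a :: ·) ++ (shuffles (a :: l) r).map (b :: ·) := by
  simp [shuffles]

theorem length_shuffles : ∀ l r : List α,
    (shuffles l r).length = (l.length + r.length).choose l.length
  | [], r => by simp
  | a :: l, [] => by simp
  | a :: l, b :: r => by
      simp only [shuffles_cons_cons, length_append, length_map, length_shuffles l (b :: r),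
        length_shuffles (a :: l) r, length_cons]
      rw [show l.length + 1 + (r.length + 1) = l.length + (r.length + 1) + 1 by omega,
        show l.length + 1 + r.length = l.length + (r.length + 1) by omega]
      exact (Nat.choose_succ_succ _ _).symm
termination_by l r => l.length + r.length

theorem nil_mem_shuffles_iff {l r : List α} : [] ∈ shuffles l r ↔ l = [] ∧ r = [] := by
  match l, r with
  | [], r => simp [eq_comm]
  | a :: l, [] => simp
  | a :: l, b :: r => simp [shuffles_cons_cons]

theorem cons_mem_shuffles_iff {x : α} {t l r : List α} :
    x :: t ∈ shuffles l r ↔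
      (∃ l', l = x :: l' ∧ t ∈ shuffles l' r) ∨ (∃ r', r = x :: r' ∧ t ∈ shuffles l r') := by
  match l, r with
  | [], r => simp [eq_comm]
  | a :: l, [] => simp [eq_comm]
  | a :: l, b :: r => simp [shuffles_cons_cons, and_comm, eq_comm]

theorem nodup_shuffles : ∀ {l r : List α}, l.Disjoint r → (shuffles l r).Nodup
  | [], r, _ => by simp
  | a :: l, [], _ => by simp
  | a :: l, b :: r, hd => by
      have hab : a ≠ b := fun h => hd mem_cons_self (h ▸ mem_cons_self)
      rw [shuffles_cons_cons, nodup_append]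
      refine ⟨(nodup_shuffles (disjoint_of_disjoint_cons_left hd)).map cons_injective,
        (nodup_shuffles (disjoint_of_disjoint_cons_right hd)).map cons_injective, ?_⟩
      simp only [mem_map]
      rintro _ ⟨_, _, rfl⟩ _ ⟨_, _, rfl⟩ h
      exact hab (cons.inj h).1
termination_by l r => l.length + r.length

theorem perm_of_mem_shuffles : ∀ {σ l r : List α}, σ ∈ shuffles l r → σ.Perm (l ++ r)
  | [], l, r, h => by simp [nil_mem_shuffles_iff.mp h]
  | x :: t, l, r, h => by
      rcases cons_mem_shuffles_iff.mp h with ⟨l', rfl, ht⟩ | ⟨r', rfl, ht⟩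
      · exact (perm_of_mem_shuffles ht).cons x
      · exact ((perm_of_mem_shuffles ht).cons x).trans perm_middle.symm

theorem mem_shuffles_iff (p : α → Bool) {l r σ : List α} (hl : ∀ x ∈ l, p x)
    (hr : ∀ x ∈ r, ¬p x) :
    σ ∈ shuffles l r ↔ σ.filter p = l ∧ σ.filter (fun x => !p x) = r := by
  induction σ generalizing l r with
  | nil => simp [nil_mem_shuffles_iff, eq_comm]
  | cons x t ih =>
    rw [cons_mem_shuffles_iff]
    by_cases hx : p x
    · constructor
      · rintro (⟨l', rfl, ht⟩ | ⟨r', rfl, -⟩)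
        · obtain ⟨h1, h2⟩ := (ih (fun y hy => hl y (mem_cons_of_mem x hy)) hr).mp ht
          simp [hx, h1, h2]
        · exact absurd hx (hr x mem_cons_self)
      · rintro ⟨rfl, h2⟩
        simp only [filter_cons, hx, Bool.not_true, if_true] at h2 ⊢
        exact .inl ⟨_, rfl, (ih (fun y hy => hl y (by simp_all)) hr).mpr ⟨rfl, h2⟩⟩
    · constructor
      · rintro (⟨l', rfl, -⟩ | ⟨r', rfl, ht⟩)
        · exact absurd (hl x mem_cons_self) hx
        · obtain ⟨h1, h2⟩ := (ih hl (fun y hy => hr y (mem_cons_of_mem x hy))).mp ht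
          simp [hx, h1, h2]
      · rintro ⟨h1, rfl⟩
        simp only [filter_cons, hx, Bool.not_false, if_true] at h1 ⊢
        exact .inr ⟨_, rfl, (ih hl (fun y hy => hr y (by simp_all))).mpr ⟨h1, rfl⟩⟩

end List

section InfectionSequence

variable {V : Type*} (G : SimpleGraph V)

/-- The adjacency clause of `IsInfSeqOn`, with `P` the set of vertices infected beforehand. -/
def IsInfSeqFrom (P : Set V) (σ : List V) : Prop :=
  ∀ i (h : i < σ.length), ∃ u, (u ∈ P ∨ u ∈ σ.take i) ∧ G.Adj u σ[i]

variable {G}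

theorem isInfSeqFrom_nil (P : Set V) : IsInfSeqFrom G P [] := fun _ h => by simp at h

theorem isInfSeqFrom_cons_iff {P : Set V} {a : V} {l : List V} :
    IsInfSeqFrom G P (a :: l) ↔ (∃ u ∈ P, G.Adj u a) ∧ IsInfSeqFrom G (insert a P) l := by
  constructor
  · intro h
    refine ⟨?_, fun i hi => ?_⟩
    · obtain ⟨u, hu, hadj⟩ := h 0 (by simp)
      exact ⟨u, by simpa using hu, hadj⟩
    · obtain ⟨u, hu, hadj⟩ := h (i + 1) (by simpa using hi)
      refine ⟨u, ?_, by simpa using hadj⟩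
      simp only [List.take_succ_cons, List.mem_cons] at hu
      simp only [Set.mem_insert_iff]
      tauto
  · rintro ⟨⟨u, hu, hadj⟩, h⟩ (_ | i) hi
    · exact ⟨u, .inl hu, hadj⟩
    · obtain ⟨w, hw, hadj⟩ := h i (by simpa using hi)
      refine ⟨w, ?_, by simpa using hadj⟩
      simp only [Set.mem_insert_iff] at hw
      simp only [List.take_succ_cons, List.mem_cons]
      tauto

theorem IsInfSeqFrom.mono {P Q : Set V} {σ : List V} (hPQ : P ⊆ Q) (h : IsInfSeqFrom G P σ) :
    IsInfSeqFrom G Q σ := fun i hi =>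
  let ⟨u, hu, hadj⟩ := h i hi
  ⟨u, hu.imp_left (@hPQ u), hadj⟩

theorem IsInfSeqFrom.of_mem_shuffles {P : Set V} {σ l r : List V} (hσ : σ ∈ l.shuffles r)
    (hl : IsInfSeqFrom G P l) (hr : IsInfSeqFrom G P r) : IsInfSeqFrom G P σ := by
  induction σ generalizing P l r with
  | nil => exact isInfSeqFrom_nil P
  | cons x t ih =>
    rcases List.cons_mem_shuffles_iff.mp hσ with ⟨l', rfl, ht⟩ | ⟨r', rfl, ht⟩
    · obtain ⟨hx, hl'⟩ := isInfSeqFrom_cons_iff.mp hl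
      exact isInfSeqFrom_cons_iff.mpr ⟨hx, ih ht hl' (hr.mono (Set.subset_insert x P))⟩
    · obtain ⟨hx, hr'⟩ := isInfSeqFrom_cons_iff.mp hr
      exact isInfSeqFrom_cons_iff.mpr ⟨hx, ih ht (hl.mono (Set.subset_insert x P)) hr'⟩

theorem isInfSeqFrom_of_isChain_cons {P : Set V} {u : V} {l : List V} (hu : u ∈ P)
    (h : (u :: l).IsChain G.Adj) : IsInfSeqFrom G P l := by
  induction l generalizing u P with
  | nil => exact isInfSeqFrom_nil P
  | cons a l ih =>
    rw [List.isChain_cons_cons] at h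
    exact isInfSeqFrom_cons_iff.mpr ⟨⟨u, hu, h.1⟩, ih (Set.mem_insert a P) h.2⟩

end InfectionSequence

section Path

open SimpleGraph

variable {m r : ℕ}

theorem map_val_filter_finRange {n a b : ℕ} (hb : b < n) :
    ((List.finRange n).filter (fun v => decide (a ≤ v.val ∧ v.val ≤ b))).map Fin.val =
      List.range' a (b + 1 - a) := by
  refine List.SortedLT.eq_of_mem_iff ?_ (List.sortedLT_range' _ _ one_ne_zero) fun x => ?_
  · exact (List.pairwise_map (f := Fin.val).mpr ((List.pairwise_lt_finRange n).filter _)).sortedLT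
  · simp only [List.mem_map, List.mem_filter, List.mem_finRange, true_and, decide_eq_true_eq,
      List.mem_range'_1]
    constructor
    · rintro ⟨v, hv, rfl⟩
      omega
    · intro hx
      exact ⟨⟨x, by omega⟩, (by omega : a ≤ x ∧ x ≤ b), rfl⟩

theorem map_val_leftList (hr : r ≤ m) : (leftList m r).map Fin.val = List.range' 1 r :=
  map_val_filter_finRange (by omega)

theorem map_val_rightList (hr : r ≤ m) :
    (rightList m r).map Fin.val = (List.range' (r + 1) (m - r)).reverse := by
  rw [rightList, List.map_reverse, map_val_filter_finRange (by omega)]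
  congr 2
  omega

@[simp] theorem mem_leftList {v : Fin (m + 2)} : v ∈ leftList m r ↔ 1 ≤ v.val ∧ v.val ≤ r := by
  simp [leftList]

@[simp] theorem mem_rightList {v : Fin (m + 2)} :
    v ∈ rightList m r ↔ r + 1 ≤ v.val ∧ v.val ≤ m := by
  simp [rightList]

theorem length_leftList (hr : r ≤ m) : (leftList m r).length = r := by
  simpa using congrArg List.length (map_val_leftList hr)

theorem length_rightList (hr : r ≤ m) : (rightList m r).length = m - r := by
  simpa using congrArg List.length (map_val_rightList hr)

theorem disjoint_leftList_rightList : (leftList m r).Disjoint (rightList m r) := by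
  intro v hl hr
  simp only [mem_leftList, mem_rightList] at hl hr
  omega

theorem isChain_pathGraph_adj_of_map_val {n : ℕ} {l : List (Fin n)}
    (h : (l.map Fin.val).IsChain (fun a b => b = a + 1)) : l.IsChain (pathGraph n).Adj :=
  List.isChain_of_isChain_map Fin.val (fun _ _ hab => pathGraph_adj.mpr (.inl hab.symm)) h

theorem isInfSeqFrom_leftList (hr : r ≤ m) :
    IsInfSeqFrom (pathGraph (m + 2)) {0, Fin.last (m + 1)} (leftList m r) := by
  refine isInfSeqFrom_of_isChain_cons (Set.mem_insert 0 _) (isChain_pathGraph_adj_of_map_val ?_)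
  rw [List.map_cons, map_val_leftList hr]
  exact List.isChain_range' 0 (r + 1) 1

theorem isInfSeqFrom_rightList (hr : r ≤ m) :
    IsInfSeqFrom (pathGraph (m + 2)) {0, Fin.last (m + 1)} (rightList m r) := by
  refine isInfSeqFrom_of_isChain_cons (u := Fin.last (m + 1)) (by simp) ?_
  rw [← List.reverse_reverse (_ :: _), List.isChain_reverse]
  refine (isChain_pathGraph_adj_of_map_val ?_).imp fun _ _ h => h.symm
  rw [List.map_reverse, List.map_cons, map_val_rightList hr, List.reverse_cons,
    List.reverse_reverse, Fin.val_last]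
  have hlast : m + 1 = r + 1 + (m - r) := by omega
  rw [hlast, ← List.range'_1_concat]
  exact List.isChain_range' _ _ 1

theorem consistent_iff_mem_shuffles (hr : r ≤ m) {σ : List (Fin (m + 2))} :
    (IsInfSeqOn (pathGraph (m + 2)) Set.univ {0, Fin.last (m + 1)} σ ∧
      σ.filter (fun v => decide (v.val ≤ r)) = leftList m r ∧
      σ.filter (fun v => decide (r < v.val)) = rightList m r) ↔
    σ ∈ (leftList m r).shuffles (rightList m r) := by
  have hfilter : σ.filter (fun v => decide (r < v.val)) =
      σ.filter (fun v => !decide (v.val ≤ r)) := by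
    simp only [← decide_not, Nat.not_le]
  rw [hfilter]
  have hshuffles := List.mem_shuffles_iff (fun v : Fin (m + 2) => decide (v.val ≤ r))
    (l := leftList m r) (r := rightList m r) (σ := σ) (by simp_all) (by simp_all)
  refine ⟨fun h => hshuffles.mpr h.2, fun hσ => ⟨⟨?_, fun v => ?_, ?_⟩, hshuffles.mp hσ⟩⟩
  · refine (List.perm_of_mem_shuffles hσ).nodup_iff.mpr (List.nodup_append.mpr ⟨?_, ?_, ?_⟩)
    · exact (List.nodup_finRange _).filter _
    · exact List.nodup_reverse.mpr ((List.nodup_finRange _).filter _)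
    · exact fun a ha b hb hab => disjoint_leftList_rightList ha (hab ▸ hb)
  · rw [(List.perm_of_mem_shuffles hσ).mem_iff]
    simp only [List.mem_append, mem_leftList, mem_rightList, Set.mem_sdiff, Set.mem_univ,
      true_and, Set.mem_insert_iff, Set.mem_singleton_iff, Fin.ext_iff, Fin.val_zero,
      Fin.val_last]
    omega
  · exact IsInfSeqFrom.of_mem_shuffles hσ (isInfSeqFrom_leftList hr) (isInfSeqFrom_rightList hr)

theorem pathColoringCount_eq_choose (hr : r ≤ m) : pathColoringCount m r = m.choose r := by
  simp_rw [pathColoringCount, consistent_iff_mem_shuffles hr]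
  rw [← List.coe_toFinset, Set.ncard_coe_finset,
    List.toFinset_card_of_nodup (List.nodup_shuffles disjoint_leftList_rightList),
    List.length_shuffles, length_leftList hr, length_rightList hr, Nat.add_sub_cancel' hr]

end Path

theorem Nat.choose_le_choose_succ_div_two (n r : ℕ) : n.choose r ≤ n.choose ((n + 1) / 2) := by
  rw [show (n + 1) / 2 = n - n / 2 by omega, Nat.choose_symm (Nat.div_le_self n 2)]
  exact Nat.choose_le_middle r n

theorem voronoi_split_maximizes_general (m : ℕ) :
    (∀ r ≤ m, pathColoringCount m r = m.choose r) ∧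
    (∀ r ≤ m, pathColoringCount m r ≤ pathColoringCount m ((m + 1) / 2)) := by
  refine ⟨fun r hr => pathColoringCount_eq_choose hr, fun r hr => ?_⟩
  rw [pathColoringCount_eq_choose hr, pathColoringCount_eq_choose (by omega)]
  exact Nat.choose_le_choose_succ_div_two m r

/-- Theorem 1's counting core: for the path with `m` interior vertices, the number
of infection sequences consistent with the contiguous coloring having `r` vertices
of the first color equals `C(m, r)`; hence the balanced (Voronoi) split
`r = ⌈m/2⌉` maximizes the number of consistent infection sequences (and so the
partition posterior, the per-sequence probability being coloring-independent). -/
theorem voronoi_split_maximizes (m : ℕ) (hm : 1 ≤ m) :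
    (∀ r ≤ m, pathColoringCount m r = m.choose r) ∧
    (∀ r ≤ m, pathColoringCount m r ≤ pathColoringCount m ((m + 1) / 2)) :=
  voronoi_split_maximizes_general m
end
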